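/- For all complex numbers z, z', the operator G∘(G + (zz'−1)·id) + E∘F on the space V of finitely supported complex functions on the set of all Young diagrams commutes with F, where E and F are the operators defined below and G is defined by G δ_λ = |λ|·δ_λ. (This is the key commutation showing that the operator B_{z,z'} on symmetric functions, given on the Schur basis by B_{z,z'} s_μ = −|μ|(|μ|−1+zz') s_μ + p_1 ∑_{μ•↗μ} (z)_{μ/μ•}(z')_{μ/μ•} s_{μ•}, commutes with multiplication by p_1 and hence preserves the principal ideal generated by p_1 − 1.) -/

import Mathlib

/-- `μ ↗ ν` : the Young diagram `ν` is obtained from `μ` by adding one box. -/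
def YoungDiagram.Covers (μ ν : YoungDiagram) : Prop :=
  μ ≤ ν ∧ ν.card = μ.card + 1

/-- `(w)_{λ/μ} = ∏_{(i,j) ∈ λ∖μ} (w + j - i)`. -/
noncomputable def YoungDiagram.poch (w : ℂ) (μ l : YoungDiagram) : ℂ :=
  ∏ b ∈ l.cells \ μ.cells, (w + (b.2 : ℂ) - (b.1 : ℂ))

/-- The space of finitely supported complex functions on the set of all Young diagrams,
with basis `{δ_λ}` (`δ_λ = Finsupp.single λ 1`). -/
abbrev YDSpace : Type := YoungDiagram →₀ ℂ

open YoungDiagram in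
/-- The operator `E`: `E δ_λ = ∑_{ν ↘ λ} (z)_{ν/λ}(z')_{ν/λ} δ_ν`, extended linearly. -/
noncomputable def Eop (z z' : ℂ) : YDSpace →ₗ[ℂ] YDSpace :=
  Finsupp.lsum ℂ fun l => LinearMap.toSpanSingleton ℂ YDSpace
    (∑ᶠ (ν : YoungDiagram) (_ : Covers l ν),
      (poch z l ν * poch z' l ν) • Finsupp.single ν (1 : ℂ))

open YoungDiagram in
/-- The operator `F`: `F δ_λ = -∑_{μ ↗ λ} δ_μ`, extended linearly. -/
noncomputable def Fop : YDSpace →ₗ[ℂ] YDSpace :=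
  Finsupp.lsum ℂ fun l => LinearMap.toSpanSingleton ℂ YDSpace
    (-∑ᶠ (μ : YoungDiagram) (_ : Covers μ l), Finsupp.single μ (1 : ℂ))

/-- The operator `H`: `H δ_λ = (zz' + 2|λ|) δ_λ`, extended linearly. -/
noncomputable def Hop (z z' : ℂ) : YDSpace →ₗ[ℂ] YDSpace :=
  Finsupp.lsum ℂ fun l => LinearMap.toSpanSingleton ℂ YDSpace
    ((z * z' + 2 * (l.card : ℂ)) • Finsupp.single l (1 : ℂ))

/-- The operator `G`: `G δ_λ = |λ| δ_λ`, extended linearly. -/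
noncomputable def Gop : YDSpace →ₗ[ℂ] YDSpace :=
  Finsupp.lsum ℂ fun l => LinearMap.toSpanSingleton ℂ YDSpace
    ((l.card : ℂ) • Finsupp.single l (1 : ℂ))

/-!
`E`, `F`, `G` satisfy `[G, F] = -F` and `[E, F] = H = zz' + 2G`, and in any ring these two
relations force `G (G + zz' - 1) + E F` to commute with `F`. The first relation holds because
`F` removes one box. In `(EF - FE) δ_λ` the off-diagonal terms cancel: the pairs `μ ↗ λ`,
`μ ↗ ν ≠ λ` correspond to the pairs `λ ↗ ν'`, `κ ↗ ν'`, `κ ≠ λ` through `ν' = λ ∪ ν`, `κ = ν`,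
`μ = λ ∩ ν`, and the skew shapes `ν/μ` and `ν'/λ` are the same box. The diagonal coefficient is
`∑ (z + c)(z' + c)` over the contents `c` of the outer corners of `λ` minus the same sum over
its inner corners; going down the rows this telescopes to `zz' + 2|λ|`.
-/

theorem commute_casimir {R A : Type*} [CommRing R] [Ring A] [Algebra R A] (c : R) {E F G : A}
    (hGF : G * F = F * (G - 1)) (hEF : E * F = F * E + c • 1 + (2 : R) • G) :
    Commute (G * (G + (c - 1) • 1) + E * F) F := by
  have hGGF : G * G * F = F * ((G - 1) * (G - 1)) := by
    rw [mul_assoc, hGF, ← mul_assoc, hGF, mul_assoc]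
  have hEFF : E * F * F = F * (E * F) + F * (c • 1 + (2 : R) • (G - 1)) := by
    rw [hEF, add_mul, add_mul, Algebra.smul_mul_assoc 2 G F, hGF, mul_assoc, ← hEF]
    simp only [Algebra.smul_mul_assoc, Algebra.mul_smul_comm, one_mul, mul_one, mul_add,
      add_assoc]
  have hexp : (G * (G + (c - 1) • 1) + E * F) * F
      = G * G * F + (c - 1) • (G * F) + E * F * F := by
    simp only [mul_add, add_mul, Algebra.mul_smul_comm, Algebra.smul_mul_assoc, mul_one]
  show _ * F = F * _
  rw [hexp, hGGF, hGF, hEFF]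
  simp only [Algebra.mul_smul_comm, mul_one, one_mul, mul_sub, mul_add, sub_mul]
  module

namespace YoungDiagram

-- Row `i` of `l` ends in an outer corner `(i, l.rowLen i)`, resp. an inner corner
-- `(i, l.rowLen i - 1)`.
def Addable (l : YoungDiagram) (i : ℕ) : Prop := i = 0 ∨ l.rowLen i < l.rowLen (i - 1)

def Removable (l : YoungDiagram) (i : ℕ) : Prop := l.rowLen (i + 1) < l.rowLen i

instance (l : YoungDiagram) (i : ℕ) : Decidable (l.Addable i) := by
  unfold Addable; infer_instance

instance (l : YoungDiagram) (i : ℕ) : Decidable (l.Removable i) := by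
  unfold Removable; infer_instance

variable {l μ ν : YoungDiagram} {i : ℕ}

lemma Addable.mem_of_lt (h : l.Addable i) {a : ℕ × ℕ} (ha : a < (i, l.rowLen i)) : a ∈ l := by
  obtain ⟨a₁, a₂⟩ := a
  rw [mem_iff_lt_rowLen]
  rw [Prod.lt_iff] at ha
  rcases Nat.lt_or_ge a₁ i with ha₁ | ha₁
  · have := l.rowLen_anti a₁ (i - 1) (by omega)
    unfold Addable at h
    omega
  · obtain rfl : a₁ = i := by omega
    omega

lemma Removable.eq_of_le (h : l.Removable i) {a : ℕ × ℕ} (ha : a ∈ l)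
    (hle : (i, l.rowLen i - 1) ≤ a) : a = (i, l.rowLen i - 1) := by
  obtain ⟨a₁, a₂⟩ := a
  rw [mem_iff_lt_rowLen] at ha
  obtain ⟨ha₁, ha₂⟩ := Prod.mk_le_mk.mp hle
  rcases ha₁.lt_or_eq with ha₁ | rfl
  · have := l.rowLen_anti (i + 1) a₁ ha₁
    unfold Removable at h
    omega
  · exact Prod.ext rfl (by omega)

def addBox (l : YoungDiagram) (i : ℕ) : YoungDiagram :=
  if h : l.Addable i then
    { cells := insert (i, l.rowLen i) l.cells
      isLowerSet := by
        intro b a hab hb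
        simp only [Finset.coe_insert, Set.mem_insert_iff, Finset.mem_coe, mem_cells] at hb ⊢
        rcases hb with rfl | hb
        · exact hab.eq_or_lt.imp id h.mem_of_lt
        · exact Or.inr (l.isLowerSet hab hb) }
  else l

def delBox (l : YoungDiagram) (i : ℕ) : YoungDiagram :=
  if h : l.Removable i then
    { cells := l.cells.erase (i, l.rowLen i - 1)
      isLowerSet := by
        rw [Finset.coe_erase]
        exact l.isLowerSet.erase fun b hb hle => h.eq_of_le hb hle }
  else l

lemma Addable.cells_addBox (h : l.Addable i) :
    (l.addBox i).cells = insert (i, l.rowLen i) l.cells := by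
  rw [addBox, dif_pos h]

lemma Removable.cells_delBox (h : l.Removable i) :
    (l.delBox i).cells = l.cells.erase (i, l.rowLen i - 1) := by
  rw [delBox, dif_pos h]

lemma mk_rowLen_notMem (l : YoungDiagram) (i : ℕ) : (i, l.rowLen i) ∉ l := by
  simp [mem_iff_lt_rowLen]

lemma Removable.mem (h : l.Removable i) : (i, l.rowLen i - 1) ∈ l := by
  rw [mem_iff_lt_rowLen]
  unfold Removable at h
  omega

lemma covers_iff_cells_eq_insert :
    Covers l ν ↔ ∃ b ∉ l, (∀ a < b, a ∈ l) ∧ ν.cells = insert b l.cells := by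
  constructor
  · rintro ⟨hle, hcard : ν.cells.card = l.cells.card + 1⟩
    have hsub : l.cells ⊆ ν.cells := cells_subset_iff.mpr hle
    obtain ⟨b, hb⟩ : ∃ b, ν.cells \ l.cells = {b} := by
      rw [← Finset.card_eq_one, Finset.card_sdiff_of_subset hsub]
      omega
    have hν : ν.cells = insert b l.cells := by
      rw [Finset.insert_eq, ← hb, Finset.sdiff_union_of_subset hsub]
    have hbl : b ∉ l := (Finset.mem_sdiff.mp (hb ▸ Finset.mem_singleton_self b)).2
    refine ⟨b, hbl, fun a hab => ?_, hν⟩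
    have ha : a ∈ ν.cells := ν.isLowerSet hab.le (by simp [hν])
    rw [hν, Finset.mem_insert] at ha
    exact ha.resolve_left hab.ne
  · rintro ⟨b, hbl, -, hν⟩
    refine ⟨cells_subset_iff.mp (hν ▸ Finset.subset_insert _ _), ?_⟩
    show ν.cells.card = l.cells.card + 1
    rw [hν, Finset.card_insert_of_notMem hbl]

lemma covers_iff_cells_eq_erase :
    Covers μ l ↔ ∃ b ∈ l, (∀ a ∈ l, b ≤ a → a = b) ∧ μ.cells = l.cells.erase b := by
  constructor
  · rintro ⟨hle, hcard : l.cells.card = μ.cells.card + 1⟩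
    have hsub : μ.cells ⊆ l.cells := cells_subset_iff.mpr hle
    obtain ⟨b, hb⟩ : ∃ b, l.cells \ μ.cells = {b} := by
      rw [← Finset.card_eq_one, Finset.card_sdiff_of_subset hsub]
      omega
    have hμ : μ.cells = l.cells.erase b := by
      rw [← Finset.sdiff_singleton_eq_erase, ← hb, Finset.sdiff_sdiff_eq_self hsub]
    have hbl : b ∈ l := (Finset.mem_sdiff.mp (hb ▸ Finset.mem_singleton_self b)).1
    refine ⟨b, hbl, fun a ha hba => ?_, hμ⟩
    by_contra hab
    have haμ : a ∈ μ.cells := by rw [hμ]; exact Finset.mem_erase.mpr ⟨hab, ha⟩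
    have hbμ : b ∈ μ.cells := μ.isLowerSet hba haμ
    simp [hμ] at hbμ
  · rintro ⟨b, hbl, -, hμ⟩
    refine ⟨cells_subset_iff.mp (hμ ▸ Finset.erase_subset _ _), ?_⟩
    show l.cells.card = μ.cells.card + 1
    rw [hμ, Finset.card_erase_add_one hbl]

lemma addable_of_forall_lt_mem {b : ℕ × ℕ} (hb : b ∉ l) (h : ∀ a < b, a ∈ l) :
    l.Addable b.1 ∧ b.2 = l.rowLen b.1 := by
  obtain ⟨i, j⟩ := b
  rw [mem_iff_lt_rowLen, not_lt] at hb
  have hj : j = l.rowLen i := by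
    rcases Nat.eq_zero_or_pos j with rfl | hj
    · omega
    · have := mem_iff_lt_rowLen.mp
        (h (i, j - 1) (Prod.lt_iff.mpr (Or.inr ⟨le_rfl, by omega⟩)))
      omega
  refine ⟨?_, hj⟩
  rcases Nat.eq_zero_or_pos i with rfl | hi
  · exact Or.inl rfl
  · have := mem_iff_lt_rowLen.mp
      (h (i - 1, j) (Prod.lt_iff.mpr (Or.inl ⟨by omega, le_rfl⟩)))
    exact Or.inr (hj ▸ this)

lemma removable_of_forall_le_eq {b : ℕ × ℕ} (hb : b ∈ l) (h : ∀ a ∈ l, b ≤ a → a = b) :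
    l.Removable b.1 ∧ b.2 = l.rowLen b.1 - 1 := by
  obtain ⟨i, j⟩ := b
  rw [mem_iff_lt_rowLen] at hb
  have hright : (i, j + 1) ∉ l := fun hmem => by
    simpa using h _ hmem (Prod.mk_le_mk.mpr ⟨le_rfl, Nat.le_succ j⟩)
  have hbelow : (i + 1, j) ∉ l := fun hmem => by
    simpa using h _ hmem (Prod.mk_le_mk.mpr ⟨Nat.le_succ i, le_rfl⟩)
  rw [mem_iff_lt_rowLen] at hright hbelow
  exact ⟨show l.rowLen (i + 1) < l.rowLen i by omega, by dsimp only; omega⟩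

lemma covers_iff_exists_addBox : Covers l ν ↔ ∃ i, l.Addable i ∧ l.addBox i = ν := by
  rw [covers_iff_cells_eq_insert]
  constructor
  · rintro ⟨b, hb, hlt, hν⟩
    obtain ⟨hi, hj⟩ := addable_of_forall_lt_mem hb hlt
    rw [show b = (b.1, l.rowLen b.1) from Prod.ext rfl hj] at hν
    exact ⟨b.1, hi, YoungDiagram.ext (hi.cells_addBox.trans hν.symm)⟩
  · rintro ⟨i, hi, rfl⟩
    exact ⟨_, l.mk_rowLen_notMem i, fun a => hi.mem_of_lt, hi.cells_addBox⟩

lemma covers_iff_exists_delBox : Covers μ l ↔ ∃ i, l.Removable i ∧ l.delBox i = μ := by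
  rw [covers_iff_cells_eq_erase]
  constructor
  · rintro ⟨b, hb, hle, hμ⟩
    obtain ⟨hi, hj⟩ := removable_of_forall_le_eq hb hle
    rw [show b = (b.1, l.rowLen b.1 - 1) from Prod.ext rfl hj] at hμ
    exact ⟨b.1, hi, YoungDiagram.ext (hi.cells_delBox.trans hμ.symm)⟩
  · rintro ⟨i, hi, rfl⟩
    exact ⟨_, hi.mem, fun a ha => hi.eq_of_le ha, hi.cells_delBox⟩

lemma Addable.le_colLen (h : l.Addable i) : i ≤ l.colLen 0 := by
  rcases h with rfl | h
  · exact Nat.zero_le _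
  · have : i - 1 < l.colLen 0 := mem_iff_lt_colLen.mp (mem_iff_lt_rowLen.mpr (by omega))
    omega

lemma Removable.lt_colLen (h : l.Removable i) : i < l.colLen 0 :=
  mem_iff_lt_colLen.mp (mem_iff_lt_rowLen.mpr (by unfold Removable at h; omega))

lemma addBox_injOn : Set.InjOn l.addBox {i | l.Addable i} := by
  intro i hi j hj e
  have hmem : (i, l.rowLen i) ∈ (l.addBox j).cells := by
    rw [← e, Addable.cells_addBox hi]
    exact Finset.mem_insert_self _ _
  rw [Addable.cells_addBox hj, Finset.mem_insert] at hmem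
  exact hmem.elim (congrArg Prod.fst) fun hl => absurd hl (l.mk_rowLen_notMem i)

lemma delBox_injOn : Set.InjOn l.delBox {i | l.Removable i} := by
  intro i hi j hj e
  by_contra hne
  have hmem : (i, l.rowLen i - 1) ∈ (l.delBox j).cells := by
    rw [Removable.cells_delBox hj]
    exact Finset.mem_erase.mpr ⟨by simp [hne], Removable.mem hi⟩
  rw [← e, Removable.cells_delBox hi] at hmem
  simp at hmem

instance : DecidableEq YoungDiagram := fun _ _ => decidable_of_iff _ YoungDiagram.ext_iff.symm

def upperCovers (l : YoungDiagram) : Finset YoungDiagram :=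
  {i ∈ Finset.range (l.colLen 0 + 1) | l.Addable i}.image l.addBox

def lowerCovers (l : YoungDiagram) : Finset YoungDiagram :=
  {i ∈ Finset.range (l.colLen 0) | l.Removable i}.image l.delBox

lemma mem_upperCovers : ν ∈ l.upperCovers ↔ Covers l ν := by
  simp only [upperCovers, Finset.mem_image, Finset.mem_filter, Finset.mem_range,
    covers_iff_exists_addBox]
  exact ⟨fun ⟨i, ⟨_, hi⟩, e⟩ => ⟨i, hi, e⟩,
    fun ⟨i, hi, e⟩ => ⟨i, ⟨Nat.lt_succ_of_le hi.le_colLen, hi⟩, e⟩⟩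

lemma mem_lowerCovers : μ ∈ l.lowerCovers ↔ Covers μ l := by
  simp only [lowerCovers, Finset.mem_image, Finset.mem_filter, Finset.mem_range,
    covers_iff_exists_delBox]
  exact ⟨fun ⟨i, ⟨_, hi⟩, e⟩ => ⟨i, hi, e⟩, fun ⟨i, hi, e⟩ => ⟨i, ⟨hi.lt_colLen, hi⟩, e⟩⟩

lemma sum_upperCovers {M : Type*} [AddCommMonoid M] (f : YoungDiagram → M) :
    ∑ ν ∈ l.upperCovers, f ν =
      ∑ i ∈ Finset.range (l.colLen 0 + 1) with l.Addable i, f (l.addBox i) :=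
  Finset.sum_image fun _ hi _ hj =>
    addBox_injOn (Finset.mem_filter.mp hi).2 (Finset.mem_filter.mp hj).2

lemma sum_lowerCovers {M : Type*} [AddCommMonoid M] (f : YoungDiagram → M) :
    ∑ μ ∈ l.lowerCovers, f μ =
      ∑ i ∈ Finset.range (l.colLen 0) with l.Removable i, f (l.delBox i) :=
  Finset.sum_image fun _ hi _ hj =>
    delBox_injOn (Finset.mem_filter.mp hi).2 (Finset.mem_filter.mp hj).2

lemma Addable.poch_addBox (h : l.Addable i) (w : ℂ) :
    poch w l (l.addBox i) = w + ((l.rowLen i - i : ℤ) : ℂ) := by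
  rw [poch, h.cells_addBox, Finset.insert_sdiff_cancel (l.mk_rowLen_notMem i),
    Finset.prod_singleton]
  push_cast
  ring

lemma Removable.poch_delBox (h : l.Removable i) (w : ℂ) :
    poch w (l.delBox i) l = w + ((l.rowLen i - i - 1 : ℤ) : ℂ) := by
  have : 1 ≤ l.rowLen i := by unfold Removable at h; omega
  rw [poch, h.cells_delBox, Finset.sdiff_erase_self h.mem, Finset.prod_singleton]
  push_cast [Nat.cast_sub this]
  ring

lemma sum_addable_sub_sum_removable {M : Type*} [AddCommGroup M] (l : YoungDiagram) (g : ℤ → M)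
    (n : ℕ) :
    ∑ i ∈ Finset.range (n + 1) with l.Addable i, g (l.rowLen i - i)
        - ∑ i ∈ Finset.range n with l.Removable i, g (l.rowLen i - i - 1)
      = g (l.rowLen n - n)
        + ∑ i ∈ Finset.range n, (g (l.rowLen i - i) - g (l.rowLen i - i - 1)) := by
  simp only [Finset.sum_filter]
  induction n with
  | zero => simp [Addable]
  | succ n ih =>
    rw [sub_eq_iff_eq_add] at ih
    rw [Finset.sum_range_succ (fun i => if l.Addable i then g (l.rowLen i - i) else 0) (n + 1),
      Finset.sum_range_succ (fun i => if l.Removable i then g (l.rowLen i - i - 1) else 0) n,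
      Finset.sum_range_succ (fun i => g (l.rowLen i - i) - g (l.rowLen i - i - 1)) n, ih]
    by_cases hlt : l.rowLen (n + 1) < l.rowLen n
    · rw [if_pos (show l.Addable (n + 1) from Or.inr hlt), if_pos (show l.Removable n from hlt)]
      abel
    · have hrow : l.rowLen (n + 1) = l.rowLen n := by
        have := l.rowLen_anti n (n + 1) n.le_succ
        omega
      rw [if_neg (show ¬ l.Addable (n + 1) by simp [Addable, hlt]),
        if_neg (show ¬ l.Removable n from hlt), hrow]
      push_cast
      rw [show (l.rowLen n : ℤ) - (n + 1) = l.rowLen n - n - 1 by ring]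
      abel

lemma card_eq_sum_rowLen (l : YoungDiagram) :
    l.card = ∑ i ∈ Finset.range (l.colLen 0), l.rowLen i := by
  rw [YoungDiagram.card, Finset.card_eq_sum_card_fiberwise (f := Prod.fst)]
  · exact Finset.sum_congr rfl fun i _ => (l.rowLen_eq_card).symm
  · rintro ⟨i, j⟩ hij
    have := l.colLen_anti 0 j j.zero_le
    have := mem_iff_lt_colLen.mp ((l.mem_cells _).mp hij)
    simp only [Finset.coe_range, Set.mem_Iio]
    omega

lemma rowLen_colLen_zero (l : YoungDiagram) : l.rowLen (l.colLen 0) = 0 := by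
  by_contra h
  exact (mem_iff_lt_colLen.mp (mem_iff_lt_rowLen.mpr (Nat.pos_of_ne_zero h))).false

theorem sum_upperCovers_sub_sum_lowerCovers (z z' : ℂ) (l : YoungDiagram) :
    ∑ ν ∈ l.upperCovers, poch z l ν * poch z' l ν
        - ∑ μ ∈ l.lowerCovers, poch z μ l * poch z' μ l
      = z * z' + 2 * l.card := by
  set g : ℤ → ℂ := fun c => (z + c) * (z' + c) with hg
  have hup : ∑ ν ∈ l.upperCovers, poch z l ν * poch z' l ν
      = ∑ i ∈ Finset.range (l.colLen 0 + 1) with l.Addable i, g (l.rowLen i - i) := by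
    rw [sum_upperCovers]
    refine Finset.sum_congr rfl fun i hi => ?_
    rw [(Finset.mem_filter.mp hi).2.poch_addBox, (Finset.mem_filter.mp hi).2.poch_addBox]
  have hdown : ∑ μ ∈ l.lowerCovers, poch z μ l * poch z' μ l
      = ∑ i ∈ Finset.range (l.colLen 0) with l.Removable i, g (l.rowLen i - i - 1) := by
    rw [sum_lowerCovers]
    refine Finset.sum_congr rfl fun i hi => ?_
    rw [(Finset.mem_filter.mp hi).2.poch_delBox, (Finset.mem_filter.mp hi).2.poch_delBox]
  have hdiff (i : ℕ) : g (l.rowLen i - i) - g (l.rowLen i - i - 1)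
      = (g (-i) - g (-(i + 1 : ℕ))) + 2 * l.rowLen i := by
    simp only [hg]
    push_cast
    ring
  rw [hup, hdown, sum_addable_sub_sum_removable, rowLen_colLen_zero,
    Finset.sum_congr rfl fun i _ => hdiff i, Finset.sum_add_distrib,
    Finset.sum_range_sub' (fun i : ℕ => g (-i)), ← Finset.mul_sum, card_eq_sum_rowLen]
  simp only [hg]
  push_cast
  ring

lemma eq_of_le_of_card_le {a b : YoungDiagram} (h : a ≤ b) (hc : b.card ≤ a.card) : a = b :=
  YoungDiagram.ext (Finset.eq_of_subset_of_card_le (cells_subset_iff.mpr h) hc)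

lemma card_sup_add_card_inf (a b : YoungDiagram) :
    (a ⊔ b).card + (a ⊓ b).card = a.card + b.card := by
  simp only [YoungDiagram.card, cells_sup, cells_inf]
  exact Finset.card_union_add_card_inter _ _

lemma card_inf_lt_of_ne {a b : YoungDiagram} (hne : a ≠ b) (hcard : a.card = b.card) :
    (a ⊓ b).card < a.card := by
  by_contra! hle
  have hinf : a ⊓ b = a := eq_of_le_of_card_le inf_le_left hle
  exact hne (eq_of_le_of_card_le (hinf ▸ inf_le_right) hcard.ge)

lemma Covers.inf_eq_and_covers_sup (hl : Covers μ l) (hν : Covers μ ν)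
    (hne : l ≠ ν) : l ⊓ ν = μ ∧ Covers l (l ⊔ ν) ∧ Covers ν (l ⊔ ν) := by
  have hcl := hl.2
  have hcν := hν.2
  have hlt := card_inf_lt_of_ne hne (by omega)
  have hinf : l ⊓ ν = μ := (eq_of_le_of_card_le (le_inf hl.1 hν.1) (by omega)).symm
  have hsum := card_sup_add_card_inf l ν
  rw [hinf] at hsum
  exact ⟨hinf, ⟨le_sup_left, by omega⟩, ⟨le_sup_right, by omega⟩⟩

lemma Covers.sup_eq_and_inf_covers {κ : YoungDiagram} (hl : Covers l ν) (hκ : Covers κ ν)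
    (hne : l ≠ κ) : l ⊔ κ = ν ∧ Covers (l ⊓ κ) l ∧ Covers (l ⊓ κ) κ := by
  have hcl := hl.2
  have hcκ := hκ.2
  have hlt := card_inf_lt_of_ne hne (by omega)
  have hsum := card_sup_add_card_inf l κ
  have hsup : l ⊔ κ = ν := eq_of_le_of_card_le (sup_le hl.1 hκ.1) (by omega)
  rw [hsup] at hsum
  exact ⟨hsup, ⟨inf_le_left, by omega⟩, ⟨inf_le_right, by omega⟩⟩

lemma poch_inf (w : ℂ) (l ν : YoungDiagram) : poch w (l ⊓ ν) ν = poch w l (l ⊔ ν) := by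
  rw [poch, poch, cells_inf, cells_sup, Finset.sdiff_inter_self_right, Finset.union_sdiff_left]

lemma sum_lowerCovers_sum_upperCovers_erase {M : Type*} [AddCommMonoid M]
    (F F' : YoungDiagram → YoungDiagram → M) (h : ∀ ν, F (l ⊓ ν) ν = F' (l ⊔ ν) ν) :
    ∑ μ ∈ l.lowerCovers, ∑ ν ∈ μ.upperCovers.erase l, F μ ν
      = ∑ ν ∈ l.upperCovers, ∑ κ ∈ ν.lowerCovers.erase l, F' ν κ := by
  simp only [Finset.sum_sigma']
  refine Finset.sum_nbij' (fun p => ⟨l ⊔ p.2, p.2⟩) (fun q => ⟨l ⊓ q.2, q.2⟩) ?_ ?_ ?_ ?_ ?_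
  all_goals
    rintro ⟨a, b⟩ hab
    simp only [Finset.mem_sigma, Finset.mem_erase, mem_upperCovers, mem_lowerCovers] at hab
    obtain ⟨h₁, hne, h₂⟩ := hab
  · obtain ⟨-, hup, hup'⟩ := h₁.inf_eq_and_covers_sup h₂ (Ne.symm hne)
    simp only [Finset.mem_sigma, Finset.mem_erase, mem_upperCovers, mem_lowerCovers]
    exact ⟨hup, hne, hup'⟩
  · obtain ⟨-, hdown, hdown'⟩ := h₁.sup_eq_and_inf_covers h₂ (Ne.symm hne)
    simp only [Finset.mem_sigma, Finset.mem_erase, mem_upperCovers, mem_lowerCovers]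
    exact ⟨hdown, hne, hdown'⟩
  · rw [(h₁.inf_eq_and_covers_sup h₂ (Ne.symm hne)).1]
  · rw [(h₁.sup_eq_and_inf_covers h₂ (Ne.symm hne)).1]
  · rw [← h, (h₁.inf_eq_and_covers_sup h₂ (Ne.symm hne)).1]

end YoungDiagram

section Operators

open YoungDiagram

variable (z z' : ℂ) (l : YoungDiagram)

lemma Eop_single : Eop z z' (Finsupp.single l 1)
    = ∑ ν ∈ l.upperCovers, (poch z l ν * poch z' l ν) • Finsupp.single ν (1 : ℂ) := by
  rw [Eop, Finsupp.lsum_single, LinearMap.toSpanSingleton_apply_one]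
  exact finsum_cond_eq_sum_of_cond_iff _ fun _ => mem_upperCovers.symm

lemma Fop_single :
    Fop (Finsupp.single l 1) = -∑ μ ∈ l.lowerCovers, Finsupp.single μ (1 : ℂ) := by
  rw [Fop, Finsupp.lsum_single, LinearMap.toSpanSingleton_apply_one]
  exact congrArg Neg.neg (finsum_cond_eq_sum_of_cond_iff _ fun _ => mem_lowerCovers.symm)

lemma Gop_single : Gop (Finsupp.single l 1) = (l.card : ℂ) • Finsupp.single l (1 : ℂ) := by
  rw [Gop, Finsupp.lsum_single, LinearMap.toSpanSingleton_apply_one]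

lemma Hop_single :
    Hop z z' (Finsupp.single l 1) = (z * z' + 2 * (l.card : ℂ)) • Finsupp.single l (1 : ℂ) := by
  rw [Hop, Finsupp.lsum_single, LinearMap.toSpanSingleton_apply_one]

lemma ext_single {φ ψ : YDSpace →ₗ[ℂ] YDSpace}
    (h : ∀ l, φ (Finsupp.single l 1) = ψ (Finsupp.single l 1)) : φ = ψ :=
  Finsupp.lhom_ext' fun l => LinearMap.ext_ring (h l)

lemma Hop_eq : Hop z z' = (z * z') • 1 + (2 : ℂ) • Gop :=
  ext_single fun l => by
    rw [Hop_single, LinearMap.add_apply, LinearMap.smul_apply, LinearMap.smul_apply,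
      Module.End.one_apply, Gop_single]
    module

lemma Gop_mul_Fop : Gop * Fop = Fop * (Gop - 1) :=
  ext_single fun l => by
    rw [Module.End.mul_apply, Module.End.mul_apply, LinearMap.sub_apply, Module.End.one_apply,
      Gop_single, map_sub, map_smul, Fop_single, map_neg, map_sum]
    have hcard : ∀ μ ∈ l.lowerCovers,
        Gop (Finsupp.single μ 1) = ((l.card : ℂ) - 1) • Finsupp.single μ 1 := fun μ hμ => by
      rw [Gop_single, (mem_lowerCovers.mp hμ).2, Nat.cast_succ, add_sub_cancel_right]
    rw [Finset.sum_congr rfl hcard, ← Finset.smul_sum]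
    module

lemma Eop_mul_Fop : Eop z z' * Fop = Fop * Eop z z' + Hop z z' :=
  ext_single fun l => by
    set X := ∑ μ ∈ l.lowerCovers, ∑ ν ∈ μ.upperCovers.erase l,
      (poch z μ ν * poch z' μ ν) • Finsupp.single ν (1 : ℂ)
    set Y := ∑ ν ∈ l.upperCovers, ∑ κ ∈ ν.lowerCovers.erase l,
      (poch z l ν * poch z' l ν) • Finsupp.single κ (1 : ℂ)
    have hEF : Eop z z' (Fop (Finsupp.single l 1)) = -(X +
        (∑ μ ∈ l.lowerCovers, poch z μ l * poch z' μ l) • Finsupp.single l (1 : ℂ)) := by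
      rw [Fop_single, map_neg, map_sum, Finset.sum_smul, ← Finset.sum_add_distrib]
      refine congrArg Neg.neg (Finset.sum_congr rfl fun μ hμ => ?_)
      rw [Eop_single, ← Finset.sum_erase_add _ _ (mem_upperCovers.mpr (mem_lowerCovers.mp hμ))]
    have hFE : Fop (Eop z z' (Finsupp.single l 1)) = -(Y +
        (∑ ν ∈ l.upperCovers, poch z l ν * poch z' l ν) • Finsupp.single l (1 : ℂ)) := by
      rw [Eop_single, map_sum, Finset.sum_smul, ← Finset.sum_add_distrib,
        ← Finset.sum_neg_distrib]
      refine Finset.sum_congr rfl fun ν hν => ?_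
      rw [map_smul, Fop_single,
        ← Finset.sum_erase_add _ _ (mem_lowerCovers.mpr (mem_upperCovers.mp hν)),
        smul_neg, smul_add, Finset.smul_sum]
    have hXY : X = Y :=
      sum_lowerCovers_sum_upperCovers_erase _ _ fun ν => by rw [poch_inf, poch_inf]
    rw [Module.End.mul_apply, LinearMap.add_apply, Module.End.mul_apply, hEF, hFE, Hop_single,
      ← sum_upperCovers_sub_sum_lowerCovers, hXY]
    module

end Operators

/-- The operator `G ∘ (G + (zz'-1)·id) + E ∘ F` commutes with `F`. -/
theorem key_commutation (z z' : ℂ) :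
    (Gop ∘ₗ (Gop + (z * z' - 1) • LinearMap.id) + Eop z z' ∘ₗ Fop) ∘ₗ Fop
      = Fop ∘ₗ (Gop ∘ₗ (Gop + (z * z' - 1) • LinearMap.id) + Eop z z' ∘ₗ Fop) := by
  have hEF : Eop z z' * Fop = Fop * Eop z z' + (z * z') • 1 + (2 : ℂ) • Gop := by
    rw [Eop_mul_Fop, Hop_eq, add_assoc]
  simpa only [Module.End.mul_eq_comp, Module.End.one_eq_id] using
    (commute_casimir (A := Module.End ℂ YDSpace) (z * z') Gop_mul_Fop hEF).eq
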